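/- Completeness of SKS for boolean tautologies in the cut-free fragment {ai↓, s, c↓, w↓}: every structure R whose boolean evaluation is true under all assignments is provable using only ai↓, switch, contraction c↓, weakening w↓ and the structural equivalence. -/

import Mathlib

/-- Structures of system SKS. -/
inductive Str : Type
  | f : Str
  | t : Str
  | atom (n : ℕ) : Str
  | or (A B : Str) : Str
  | and (A B : Str) : Str
  | neg (A : Str) : Str

/-- Positive contexts: a structure with one hole, not under a negation. -/
inductive Ctx : Type
  | hole : Ctx
  | orl (S : Ctx) (T : Str) : Ctx
  | orr (T : Str) (S : Ctx) : Ctx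
  | andl (S : Ctx) (T : Str) : Ctx
  | andr (T : Str) (S : Ctx) : Ctx

def Ctx.fill : Ctx → Str → Str
  | .hole, R => R
  | .orl S T, R => .or (S.fill R) T
  | .orr T S, R => .or T (S.fill R)
  | .andl S T, R => .and (S.fill R) T
  | .andr T S, R => .and T (S.fill R)

/-- Structural equivalence `=` of SKS. -/
inductive equiv : Str → Str → Prop
  | refl (R) : equiv R R
  | symm {A B} : equiv A B → equiv B A
  | trans {A B C} : equiv A B → equiv B C → equiv A C
  | or_congr {A B C D} : equiv A B → equiv C D → equiv (.or A C) (.or B D)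
  | and_congr {A B C D} : equiv A B → equiv C D → equiv (.and A C) (.and B D)
  | neg_congr {A B} : equiv A B → equiv (.neg A) (.neg B)
  | or_assoc (A B C) : equiv (.or (.or A B) C) (.or A (.or B C))
  | or_comm (A B) : equiv (.or A B) (.or B A)
  | and_assoc (A B C) : equiv (.and (.and A B) C) (.and A (.and B C))
  | and_comm (A B) : equiv (.and A B) (.and B A)
  | dm_or (A B) : equiv (.neg (.or A B)) (.and (.neg A) (.neg B))
  | dm_and (A B) : equiv (.neg (.and A B)) (.or (.neg A) (.neg B))
  | neg_neg (A) : equiv (.neg (.neg A)) A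
  | neg_f : equiv (.neg .f) .t
  | neg_t : equiv (.neg .t) .f
  | or_f (R) : equiv (.or .f R) R
  | and_t (R) : equiv (.and .t R) R
  | or_t_t : equiv (.or .t .t) .t
  | and_f_f : equiv (.and .f .f) .f

/-- Boolean evaluation of structures. -/
def eval (v : ℕ → Bool) : Str → Bool
  | .f => false
  | .t => true
  | .atom n => v n
  | .or A B => eval v A || eval v B
  | .and A B => eval v A && eval v B
  | .neg A => !(eval v A)

/-- Steps of the cut-free (down) fragment {ai↓, s, c↓, w↓}. -/
inductive stepD : Str → Str → Prop
  | ai_down (S : Ctx) (a : ℕ) :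
      stepD (S.fill .t) (S.fill (.or (.atom a) (.neg (.atom a))))
  | s (S : Ctx) (R U T : Str) :
      stepD (S.fill (.and (.or R U) T)) (S.fill (.or (.and R T) U))
  | c_down (S : Ctx) (R : Str) : stepD (S.fill (.or R R)) (S.fill R)
  | w_down (S : Ctx) (R : Str) : stepD (S.fill .f) (S.fill R)

inductive derivD : Str → Str → Prop
  | refl (R) : derivD R R
  | step {A B C} : stepD A B → derivD B C → derivD A C
  | eq {A B C} : equiv A B → derivD B C → derivD A C

/-!
Read a list of structures as a sequent, i.e. as its disjunction, and run cut-free proof search on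
it. Every rule is invertible: `t` is closed by weakening, `f`, `∨` and the De Morgan and negation
laws are absorbed by `=`, and `(A ∧ B) ∨ X` is obtained from `A ∨ X` and `B ∨ X` by two switches
and a contraction. Decomposing the first formula until only literals remain, a tautological
disjunction of literals must contain a complementary pair `a`, `¬a`, which `ai↓` proves; the
other literals are added by weakening.
-/

namespace equiv

theorem fill (C : Ctx) {A B : Str} (h : equiv A B) : equiv (C.fill A) (C.fill B) := by
  induction C with
  | hole => exact h
  | orl S T ih => exact or_congr ih (refl T)
  | orr T S ih => exact or_congr (refl T) ih
  | andl S T ih => exact and_congr ih (refl T)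
  | andr T S ih => exact and_congr (refl T) ih

theorem eval_eq (v : ℕ → Bool) {A B : Str} (h : equiv A B) : eval v A = eval v B := by
  induction h <;> simp [eval, *, Bool.or_left_comm, Bool.or_comm, Bool.and_left_comm, Bool.and_comm]

end equiv

def Ctx.comp : Ctx → Ctx → Ctx
  | .hole, D => D
  | .orl S T, D => .orl (S.comp D) T
  | .orr T S, D => .orr T (S.comp D)
  | .andl S T, D => .andl (S.comp D) T
  | .andr T S, D => .andr T (S.comp D)

theorem Ctx.fill_comp (C D : Ctx) (R : Str) : (C.comp D).fill R = C.fill (D.fill R) := by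
  induction C <;> simp only [Ctx.comp, Ctx.fill, *]

theorem stepD.fill (C : Ctx) {A B : Str} (h : stepD A B) : stepD (C.fill A) (C.fill B) := by
  cases h <;> simp only [← Ctx.fill_comp] <;> constructor

namespace derivD

theorem trans {A B C : Str} (h₁ : derivD A B) (h₂ : derivD B C) : derivD A C := by
  induction h₁ with
  | refl => exact h₂
  | step s _ ih => exact step s (ih h₂)
  | eq e _ ih => exact eq e (ih h₂)

instance : Trans derivD derivD derivD := ⟨trans⟩

theorem single {A B : Str} (h : stepD A B) : derivD A B := step h (refl B)

theorem of_equiv {A B : Str} (h : equiv A B) : derivD A B := eq h (refl B)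

theorem fill (C : Ctx) {A B : Str} (h : derivD A B) : derivD (C.fill A) (C.fill B) := by
  induction h with
  | refl => exact refl _
  | step s _ ih => exact step (s.fill C) ih
  | eq e _ ih => exact eq (e.fill C) ih

theorem weaken_left (A B : Str) : derivD B (.or A B) :=
  eq (equiv.or_f B).symm (single (.w_down (.orl .hole B) A))

theorem weaken_right (A B : Str) : derivD B (.or B A) :=
  (weaken_left A B).trans (of_equiv (equiv.or_comm A B))

theorem and_intro {A B X : Str} (hA : derivD .t (.or A X)) (hB : derivD .t (.or B X)) :
    derivD .t (.or (.and A B) X) :=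
  calc derivD Str.t (.and .t .t) := of_equiv (equiv.and_t .t).symm
    derivD _ (.and (.or A X) .t) := hA.fill (.andl .hole .t)
    derivD _ (.and (.or A X) (.or B X)) := hB.fill (.andr _ .hole)
    derivD _ (.or (.and A (.or B X)) X) := single (.s .hole A X _)
    derivD _ (.or (.and (.or B X) A) X) := of_equiv (.or_congr (.and_comm _ _) (.refl X))
    derivD _ (.or (.or (.and B A) X) X) := single (.s (.orl .hole X) B X A)
    derivD _ (.or (.and B A) (.or X X)) := of_equiv (.or_assoc _ _ _)
    derivD _ (.or (.and B A) X) := single (.c_down (.orr _ .hole) X)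
    derivD _ (.or (.and A B) X) := of_equiv (.or_congr (.and_comm _ _) (.refl X))

end derivD

def disj : List Str → Str
  | [] => .f
  | A :: Γ => .or A (disj Γ)

theorem eval_disj_eq_true (v : ℕ → Bool) (Γ : List Str) :
    eval v (disj Γ) = true ↔ ∃ A ∈ Γ, eval v A = true := by
  induction Γ with
  | nil => simp [disj, eval]
  | cons A Γ ih => simp [disj, eval, ih]

theorem equiv_disj_of_perm {Γ Δ : List Str} (h : Γ.Perm Δ) : equiv (disj Γ) (disj Δ) := by
  induction h with
  | nil => exact .refl _
  | cons A _ ih => exact .or_congr (.refl A) ih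
  | swap A B Γ =>
    exact ((equiv.or_assoc B A _).symm.trans (.or_congr (.or_comm B A) (.refl _))).trans
      (.or_assoc A B _)
  | trans _ _ ih₁ ih₂ => exact ih₁.trans ih₂

theorem derivD_disj_of_sublist {Γ Δ : List Str} (h : Γ.Sublist Δ) :
    derivD (disj Γ) (disj Δ) := by
  induction h with
  | slnil => exact .refl _
  | cons A _ ih => exact ih.trans (.weaken_left A _)
  | cons_cons A _ ih => exact ih.fill (.orr A .hole)

theorem derivD_disj_of_subperm {Γ Δ : List Str} (h : Γ.Subperm Δ) :
    derivD (disj Γ) (disj Δ) :=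
  let ⟨_, hperm, hsub⟩ := h
  (derivD.of_equiv (equiv_disj_of_perm hperm.symm)).trans (derivD_disj_of_sublist hsub)

def Tautology (R : Str) : Prop := ∀ v, eval v R = true

theorem Tautology.of_equiv {R R' : Str} (hR : Tautology R) (h : equiv R R') : Tautology R' :=
  fun v => (h.eval_eq v).symm.trans (hR v)

theorem Tautology.and_or {A B X : Str} (h : Tautology (.or (.and A B) X)) :
    Tautology (.or A X) ∧ Tautology (.or B X) := by
  constructor <;> intro v <;> have := h v <;>
    simp only [eval, Bool.or_eq_true, Bool.and_eq_true] at this ⊢ <;> tauto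

theorem derivD_of_tautology_of_equiv {R R' : Str} (h : equiv R R')
    (ih : Tautology R' → derivD .t R') (hR : Tautology R) : derivD .t R :=
  (ih (hR.of_equiv h)).trans (.of_equiv h.symm)

def IsLiteral : Str → Prop
  | .atom _ | .neg (.atom _) => True
  | _ => False

theorem exists_atom_mem_and_neg_mem {Λ : List Str} (hΛ : ∀ L ∈ Λ, IsLiteral L)
    (h : Tautology (disj Λ)) : ∃ a, Str.atom a ∈ Λ ∧ Str.neg (.atom a) ∈ Λ := by
  classical
  by_contra! hΛ'
  -- the valuation making exactly the atoms negated in `Λ` true falsifies every literal of `Λ`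
  obtain ⟨L, hL, htrue⟩ :=
    (eval_disj_eq_true _ Λ).1 (h fun a => decide (Str.neg (.atom a) ∈ Λ))
  match L, hΛ L hL with
  | .atom a, _ => simp_all [eval]
  | .neg (.atom a), _ => simp_all [eval]

theorem derivD_of_tautology_literals {Λ : List Str} (hΛ : ∀ L ∈ Λ, IsLiteral L)
    (h : Tautology (disj Λ)) : derivD .t (disj Λ) := by
  obtain ⟨a, ha, hna⟩ := exists_atom_mem_and_neg_mem hΛ h
  have hsub : [Str.atom a, .neg (.atom a)].Subperm Λ :=
    List.Nodup.subperm (by simp) (by simp [ha, hna])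
  calc derivD Str.t (.or (.atom a) (.neg (.atom a))) := .single (.ai_down .hole a)
    derivD _ (disj [.atom a, .neg (.atom a)]) :=
      .of_equiv (.or_congr (.refl _) ((equiv.or_comm _ _).trans (.or_f _)).symm)
    derivD _ (disj Λ) := derivD_disj_of_subperm hsub

/-- Proof-search measure; negation doubles it so that the De Morgan laws decrease it. -/
def rank : Str → ℕ
  | .or A B | .and A B => rank A + rank B + 2
  | .neg A => 2 * rank A + 1
  | _ => 1

theorem derivD_of_tautology_disj_append :
    ∀ (Γ Λ : List Str), (∀ L ∈ Λ, IsLiteral L) →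
      Tautology (disj (Γ ++ Λ)) → derivD .t (disj (Γ ++ Λ))
  | [], _, hΛ, h => derivD_of_tautology_literals hΛ h
  | .t :: _, _, _, _ => .weaken_right _ _
  | .f :: Γ, Λ, hΛ, h =>
    derivD_of_tautology_of_equiv (.or_f _) (derivD_of_tautology_disj_append Γ Λ hΛ) h
  | .atom a :: Γ, Λ, hΛ, h =>
    derivD_of_tautology_of_equiv (equiv_disj_of_perm List.perm_middle.symm)
      (derivD_of_tautology_disj_append Γ (.atom a :: Λ)
        (List.forall_mem_cons.2 ⟨trivial, hΛ⟩)) h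
  | .neg (.atom a) :: Γ, Λ, hΛ, h =>
    derivD_of_tautology_of_equiv (equiv_disj_of_perm List.perm_middle.symm)
      (derivD_of_tautology_disj_append Γ (.neg (.atom a) :: Λ)
        (List.forall_mem_cons.2 ⟨trivial, hΛ⟩)) h
  | .or A B :: Γ, Λ, hΛ, h =>
    derivD_of_tautology_of_equiv (.or_assoc _ _ _)
      (derivD_of_tautology_disj_append (A :: B :: Γ) Λ hΛ) h
  | .and A B :: Γ, Λ, hΛ, h =>
    .and_intro (derivD_of_tautology_disj_append (A :: Γ) Λ hΛ h.and_or.1)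
      (derivD_of_tautology_disj_append (B :: Γ) Λ hΛ h.and_or.2)
  | .neg .f :: Γ, Λ, hΛ, h =>
    derivD_of_tautology_of_equiv (.or_congr .neg_f (.refl _))
      (derivD_of_tautology_disj_append (.t :: Γ) Λ hΛ) h
  | .neg .t :: Γ, Λ, hΛ, h =>
    derivD_of_tautology_of_equiv (.or_congr .neg_t (.refl _))
      (derivD_of_tautology_disj_append (.f :: Γ) Λ hΛ) h
  | .neg (.or A B) :: Γ, Λ, hΛ, h =>
    derivD_of_tautology_of_equiv (.or_congr (.dm_or A B) (.refl _))
      (derivD_of_tautology_disj_append (.and A.neg B.neg :: Γ) Λ hΛ) h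
  | .neg (.and A B) :: Γ, Λ, hΛ, h =>
    derivD_of_tautology_of_equiv (.or_congr (.dm_and A B) (.refl _))
      (derivD_of_tautology_disj_append (.or A.neg B.neg :: Γ) Λ hΛ) h
  | .neg (.neg A) :: Γ, Λ, hΛ, h =>
    derivD_of_tautology_of_equiv (.or_congr (.neg_neg A) (.refl _))
      (derivD_of_tautology_disj_append (A :: Γ) Λ hΛ) h
termination_by Γ => (Γ.map rank).sum
decreasing_by all_goals simp only [List.map_cons, List.sum_cons, rank]; omega

/-- completeness of the cut-free fragment of SKS:
every boolean tautology is provable using only ai↓, s, c↓, w↓ and `=`. -/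
theorem cut_free_completeness (R : Str)
    (h : ∀ v : ℕ → Bool, eval v R = true) : derivD .t R :=
  derivD_of_tautology_of_equiv ((equiv.or_f R).symm.trans (.or_comm _ _))
    (derivD_of_tautology_disj_append [R] [] (by simp)) h
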